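/- Let m, n be natural numbers and G an arbitrary m×n complex matrix. Define G_ex = [G , J_m · conj(G) · J_n] ∈ ℂ^{m×2n}. Then every entry of the matrix G_re = Q_mᴴ · G_ex · Q_{2n} is real (has zero imaginary part), where Q_s denotes the unitary matrix defined by Q_{2k} = (1/√2)·[[I_k, i·I_k],[J_k, −i·J_k]] if s = 2k is even, and Q_{2k+1} = (1/√2)·[[I_k, 0, i·I_k],[0, √2, 0],[J_k, 0, −i·J_k]] if s = 2k+1 is odd. (This is the claim of Eqs. (49)–(50): the transformed 3-D matrix pencil matrix G_re(t) is a real matrix, which reduces computational complexity without losing accuracy.) -/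

import Mathlib

open Matrix

def Jmat (k : ℕ) : Matrix (Fin k) (Fin k) ℂ :=
  Matrix.of fun a b => if (a : ℕ) + (b : ℕ) = k - 1 then 1 else 0

/-- The even-size unitary transformation matrix of Eq. (51):
`Q_{2k} = (1/√2) · [[I_k, i·I_k], [J_k, −i·J_k]]`. -/
noncomputable def Qeven (k : ℕ) : Matrix (Fin (2 * k)) (Fin (2 * k)) ℂ :=
  ((Real.sqrt 2 : ℂ))⁻¹ •
    (Matrix.reindex (finSumFinEquiv.trans (finCongr (two_mul k).symm))
      (finSumFinEquiv.trans (finCongr (two_mul k).symm))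
      (Matrix.fromBlocks (1 : Matrix (Fin k) (Fin k) ℂ)
        (Complex.I • (1 : Matrix (Fin k) (Fin k) ℂ))
        (Jmat k) ((-Complex.I) • Jmat k)))

/-- Index identification for the 3×3 block structure of the odd-size matrix. -/
def oddIndexEquiv (k : ℕ) : (Fin k ⊕ (Fin 1 ⊕ Fin k)) ≃ Fin (2 * k + 1) :=
  ((Equiv.refl (Fin k)).sumCongr finSumFinEquiv).trans
    (finSumFinEquiv.trans (finCongr (by omega)))

/-- The odd-size unitary transformation matrix of Eq. (52):
`Q_{2k+1} = (1/√2) · [[I_k, 0, i·I_k], [0, √2, 0], [J_k, 0, −i·J_k]]`. -/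
noncomputable def Qodd (k : ℕ) : Matrix (Fin (2 * k + 1)) (Fin (2 * k + 1)) ℂ :=
  ((Real.sqrt 2 : ℂ))⁻¹ •
    (Matrix.reindex (oddIndexEquiv k) (oddIndexEquiv k)
      (Matrix.fromBlocks (1 : Matrix (Fin k) (Fin k) ℂ)
        (Matrix.fromCols (0 : Matrix (Fin k) (Fin 1) ℂ)
          (Complex.I • (1 : Matrix (Fin k) (Fin k) ℂ)))
        (Matrix.fromRows (0 : Matrix (Fin 1) (Fin k) ℂ) (Jmat k))
        (Matrix.fromBlocks ((Real.sqrt 2 : ℂ) • (1 : Matrix (Fin 1) (Fin 1) ℂ)) 0 0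
          ((-Complex.I) • Jmat k))))

/-- The size-s unitary transformation matrix `Q_s` of the unitary matrix pencil
method, defined as `Qeven (s/2)` for even `s` and `Qodd (s/2)` for odd `s`. -/
noncomputable def Qmat (s : ℕ) : Matrix (Fin s) (Fin s) ℂ :=
  if h : s % 2 = 0 then
    Matrix.reindex (finCongr (by omega : 2 * (s / 2) = s))
      (finCongr (by omega : 2 * (s / 2) = s)) (Qeven (s / 2))
  else
    Matrix.reindex (finCongr (by omega : 2 * (s / 2) + 1 = s))
      (finCongr (by omega : 2 * (s / 2) + 1 = s)) (Qodd (s / 2))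

/-!
Write `conj` for entrywise conjugation. Both `Q_s` and `G_ex` are "centro-conjugate":
`conj Q_s = J_s Q_s` and `conj G_ex = J_m G_ex J_{2n}`. As `J` is a symmetric involution,
`Q_mᴴ = (J_m Q_m)ᵀ = Q_mᵀ J_m`, hence
`conj (Q_mᴴ G_ex Q_{2n}) = Q_mᵀ (J_m G_ex J_{2n}) (J_{2n} Q_{2n}) = Q_mᴴ G_ex Q_{2n}`,
and a matrix fixed by `conj` is real.
-/

open ComplexConjugate

lemma Fin.revPerm_inv (k : ℕ) : (Fin.revPerm : Equiv.Perm (Fin k))⁻¹ = Fin.revPerm :=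
  Fin.revPerm_symm

lemma Matrix.reindex_mul_reindex {R l m n l' m' n' : Type*} [NonUnitalNonAssocSemiring R]
    [Fintype m] [Fintype m'] (el : l ≃ l') (em : m ≃ m') (en : n ≃ n')
    (A : Matrix l m R) (B : Matrix m n R) :
    reindex el em A * reindex em en B = reindex el en (A * B) :=
  submatrix_mul_equiv A B _ em.symm _

lemma Matrix.map_reindex {α β l m l' m' : Type*} (el : l ≃ l') (em : m ≃ m')
    (A : Matrix l m α) (f : α → β) :
    (reindex el em A).map f = reindex el em (A.map f) :=
  rfl

lemma Matrix.map_conj_smul {m n : Type*} (c : ℂ) (M : Matrix m n ℂ) :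
    (c • M).map conj = conj c • M.map conj := by
  ext i j
  simp

lemma Matrix.im_apply_eq_zero_of_map_conj_eq {m n : Type*} {M : Matrix m n ℂ}
    (hM : M.map conj = M) (i : m) (j : n) : (M i j).im = 0 :=
  Complex.conj_eq_iff_im.mp (congrFun (congrFun hM i) j)

lemma map_conj_conjTranspose_mul_mul {l m n p : Type*} [Fintype m] [Fintype n] [DecidableEq n]
    (J₁ : Matrix m m ℂ) (J₂ : Matrix n n ℂ) (hJ₁ : J₁ᵀ = J₁) (hJ₂ : J₂ * J₂ = 1)
    (P : Matrix m l ℂ) (X : Matrix m n ℂ) (Q : Matrix n p ℂ)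
    (hP : P.map conj = J₁ * P) (hX : X.map conj = J₁ * X * J₂) (hQ : Q.map conj = J₂ * Q) :
    (Pᴴ * X * Q).map conj = Pᴴ * X * Q := by
  have hPH : Pᴴ = Pᵀ * J₁ := by
    rw [← hJ₁, ← transpose_mul, ← hP]
    rfl
  have hPH_conj : Pᴴ.map conj = Pᵀ := by
    ext i j
    simp
  calc (Pᴴ * X * Q).map conj = Pᵀ * (J₁ * X * J₂) * (J₂ * Q) := by
        rw [Matrix.map_mul, Matrix.map_mul, hPH_conj, hX, hQ]
    _ = Pᵀ * J₁ * X * (J₂ * J₂) * Q := by simp only [Matrix.mul_assoc]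
    _ = Pᴴ * X * Q := by rw [hJ₂, Matrix.mul_one, hPH]

lemma Jmat_eq_permMatrix (k : ℕ) : Jmat k = Fin.revPerm.permMatrix ℂ := by
  ext a b
  rw [Equiv.Perm.permMatrix, PEquiv.toMatrix_toPEquiv_apply, Fin.revPerm_apply, Pi.single_apply,
    Jmat, of_apply]
  congr 1
  rw [eq_iff_iff, Fin.ext_iff, Fin.val_rev]
  omega

lemma Jmat_mul_self (k : ℕ) : Jmat k * Jmat k = 1 := by
  nth_rw 1 [Jmat_eq_permMatrix, ← Fin.revPerm_inv]
  rw [Jmat_eq_permMatrix, ← permMatrix_mul, mul_inv_cancel, permMatrix_one]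

lemma Jmat_transpose (k : ℕ) : (Jmat k)ᵀ = Jmat k := by
  rw [Jmat_eq_permMatrix, transpose_permMatrix, Fin.revPerm_inv]

lemma Jmat_map_conj (k : ℕ) : (Jmat k).map conj = Jmat k := by
  ext a b
  simp [Jmat, apply_ite conj]

def evenIndexEquiv (k : ℕ) : Fin k ⊕ Fin k ≃ Fin (2 * k) :=
  finSumFinEquiv.trans (finCongr (two_mul k).symm)

lemma Jmat_two_mul (k : ℕ) :
    Jmat (2 * k) = reindex (evenIndexEquiv k) (evenIndexEquiv k)
      (fromBlocks 0 (Jmat k) (Jmat k) 0) := by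
  ext a b
  obtain ⟨i, rfl⟩ := (evenIndexEquiv k).surjective a
  obtain ⟨j, rfl⟩ := (evenIndexEquiv k).surjective b
  rw [reindex_apply, submatrix_apply, Equiv.symm_apply_apply, Equiv.symm_apply_apply]
  rcases i with i | i <;> rcases j with j | j <;> simp [Jmat, evenIndexEquiv] <;>
    (try split_ifs) <;> first | rfl | omega

lemma Jmat_two_mul_add_one (k : ℕ) :
    Jmat (2 * k + 1) = reindex (oddIndexEquiv k) (oddIndexEquiv k)
      (fromBlocks 0 (fromCols (0 : Matrix (Fin k) (Fin 1) ℂ) (Jmat k))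
        (fromRows (0 : Matrix (Fin 1) (Fin k) ℂ) (Jmat k)) (fromBlocks 1 0 0 0)) := by
  ext a b
  obtain ⟨i, rfl⟩ := (oddIndexEquiv k).surjective a
  obtain ⟨j, rfl⟩ := (oddIndexEquiv k).surjective b
  rw [reindex_apply, submatrix_apply, Equiv.symm_apply_apply, Equiv.symm_apply_apply]
  rcases i with i | i | i <;> rcases j with j | j | j <;> simp [Jmat, oddIndexEquiv, one_apply] <;>
    (try split_ifs) <;> first | rfl | omega

lemma map_conj_smul_reindex_eq_Jmat_mul {ι : Type*} [Fintype ι] {s : ℕ}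
    (e : ι ≃ Fin s) (c : ℂ) (hc : conj c = c) (P B : Matrix ι ι ℂ)
    (hJ : Jmat s = reindex e e P) (hB : B.map conj = P * B) :
    (c • reindex e e B).map conj = Jmat s * (c • reindex e e B) := by
  rw [map_conj_smul, hc, map_reindex, hB, hJ, Matrix.mul_smul, reindex_mul_reindex]

lemma Qeven_map_conj (k : ℕ) : (Qeven k).map conj = Jmat (2 * k) * Qeven k := by
  refine map_conj_smul_reindex_eq_Jmat_mul (evenIndexEquiv k) _ (by simp) _ _
    (Jmat_two_mul k) ?_
  rw [fromBlocks_map, fromBlocks_multiply]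
  simp [Jmat_mul_self, Jmat_map_conj, map_conj_smul, -neg_smul]

lemma Qodd_map_conj (k : ℕ) : (Qodd k).map conj = Jmat (2 * k + 1) * Qodd k := by
  refine map_conj_smul_reindex_eq_Jmat_mul (oddIndexEquiv k) _ (by simp) _ _
    (Jmat_two_mul_add_one k) ?_
  simp only [fromBlocks_map, fromCols_map, fromRows_map, fromBlocks_multiply,
    fromCols_mul_fromRows, fromCols_mul_fromBlocks, fromBlocks_mul_fromRows]
  simp only [map_zero, map_one, Matrix.map_one, Matrix.map_zero, map_conj_smul, Complex.conj_I,
    Jmat_map_conj, Complex.coe_smul, map_neg, neg_neg, mul_one, Matrix.mul_zero, Jmat_mul_self,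
    zero_add, Matrix.zero_mul, Matrix.mul_smul, Matrix.mul_one, smul_zero, add_zero,
    Algebra.mul_smul_comm, zero_mul, fromRows_zero, mul_fromCols, fromBlocks_inj, true_and]
  ext (i | i) (j | j) <;> simp [one_apply, Fin.fin_one_eq_zero]

lemma map_conj_reindex_finCongr {t s : ℕ} (h : t = s) (M : Matrix (Fin t) (Fin t) ℂ)
    (hM : M.map conj = Jmat t * M) :
    (reindex (finCongr h) (finCongr h) M).map conj =
      Jmat s * reindex (finCongr h) (finCongr h) M := by
  subst h
  simpa using hM

lemma Qmat_map_conj (s : ℕ) : (Qmat s).map conj = Jmat s * Qmat s := by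
  rw [Qmat]
  split_ifs
  · exact map_conj_reindex_finCongr _ _ (Qeven_map_conj _)
  · exact map_conj_reindex_finCongr _ _ (Qodd_map_conj _)

lemma map_conj_fromCols_Jmat_conj {m n : ℕ} (G : Matrix (Fin m) (Fin n) ℂ) :
    (fromCols G (Jmat m * G.map conj * Jmat n)).map conj =
      Jmat m * fromCols G (Jmat m * G.map conj * Jmat n) * fromBlocks 0 (Jmat n) (Jmat n) 0 := by
  have hG : (G.map conj).map conj = G := by
    ext i j
    simp
  rw [fromCols_map, Matrix.map_mul, Matrix.map_mul, hG, Jmat_map_conj, Jmat_map_conj,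
    mul_fromCols, fromCols_mul_fromBlocks]
  simp only [Matrix.mul_zero, zero_add, add_zero, ← Matrix.mul_assoc, Jmat_mul_self,
    Matrix.one_mul]
  rw [Matrix.mul_assoc _ (Jmat n), Jmat_mul_self, Matrix.mul_one]

/-- **Eqs. (49)–(50): the transformed matrix `G_re = Q_mᴴ · G_ex · Q_{2n}` is real.**
For an arbitrary m×n complex matrix `G`, with `G_ex = [G , J_m · conj(G) · J_n]`,
every entry of `Q_mᴴ · G_ex · Q_{2n}` has zero imaginary part. -/
theorem Gre_real (m n : ℕ) (G : Matrix (Fin m) (Fin n) ℂ)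
    (Gex : Matrix (Fin m) (Fin (2 * n)) ℂ)
    (hGex : Gex = Matrix.reindex (Equiv.refl (Fin m))
      (finSumFinEquiv.trans (finCongr (two_mul n).symm))
      (Matrix.fromCols G (Jmat m * G.map (starRingEnd ℂ) * Jmat n))) :
    ∀ (a : Fin m) (b : Fin (2 * n)),
      (((Qmat m)ᴴ * Gex * Qmat (2 * n)) a b).im = 0 := by
  have hGex_conj : Gex.map conj = Jmat m * Gex * Jmat (2 * n) := by
    rw [hGex, map_reindex, map_conj_fromCols_Jmat_conj, Jmat_two_mul,
      ← reindex_mul_reindex _ (evenIndexEquiv n),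
      ← reindex_mul_reindex (Equiv.refl _) (Equiv.refl _), reindex_refl_refl]
    rfl
  exact im_apply_eq_zero_of_map_conj_eq <|
    map_conj_conjTranspose_mul_mul _ _ (Jmat_transpose m) (Jmat_mul_self (2 * n)) _ _ _
      (Qmat_map_conj m) hGex_conj (Qmat_map_conj (2 * n))
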